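/- Let K be a field. Consider a commutative diagram of K-vector spaces with exact rows: the top row is A → B → C → E (with maps u : A → B, q : B → C, r : C → E), the bottom row is D → A' → B' → C' → E' (with maps λ : D → A', u' : A' → B', q' : B' → C', r' : C' → E'), and vertical K-linear maps f : A → A', g : B → B', h : C → C', e : E → E' making every square commute. Suppose that g is an isomorphism, that E = 0 and E' = 0, and that C' is one-dimensional over K. Then h is surjective, and the dimension of C over K equals 1 plus the dimension of coker(f + λ), where f + λ : A ⊕ D → A' is the K-linear map (a, d) ↦ f(a) + λ(d) and coker(f + λ) = A' / im(f + λ). -/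
import Mathlib


/-- Given a commutative diagram of `K`-vector spaces with exact rows
    A → B → C → E  (top row)
    D → A' → B' → C' → E'  (bottom row)
and vertical maps `f, g, h, e` making every square commute, if `g` is an
isomorphism, `E = 0 = E'`, and `C'` is one-dimensional, then `h` is
surjective and `dim C = 1 + dim coker (f + λ)`. -/
theorem dim_eq_one_add_dim_coker_of_ladder.{uA, uB, uC, uE, uD, uA', uB', uC', uE'}
    (K : Type*) [Field K]
    (A : Type uA) (B : Type uB) (C : Type uC) (E : Type uE) (D : Type uD)
    (A' : Type uA') (B' : Type uB') (C' : Type uC') (E' : Type uE')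
    [AddCommGroup A] [Module K A] [AddCommGroup B] [Module K B]
    [AddCommGroup C] [Module K C] [AddCommGroup E] [Module K E]
    [AddCommGroup D] [Module K D] [AddCommGroup A'] [Module K A']
    [AddCommGroup B'] [Module K B'] [AddCommGroup C'] [Module K C']
    [AddCommGroup E'] [Module K E']
    (u : A →ₗ[K] B) (q : B →ₗ[K] C) (r : C →ₗ[K] E)
    (lam : D →ₗ[K] A') (u' : A' →ₗ[K] B') (q' : B' →ₗ[K] C')
    (r' : C' →ₗ[K] E')
    (f : A →ₗ[K] A') (g : B →ₗ[K] B') (h : C →ₗ[K] C') (e : E →ₗ[K] E')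
    (hTop1 : LinearMap.range u = LinearMap.ker q)
    (hTop2 : LinearMap.range q = LinearMap.ker r)
    (hBot1 : LinearMap.range lam = LinearMap.ker u')
    (hBot2 : LinearMap.range u' = LinearMap.ker q')
    (hBot3 : LinearMap.range q' = LinearMap.ker r')
    (hSq1 : g.comp u = u'.comp f)
    (hSq2 : h.comp q = q'.comp g)
    (hSq3 : e.comp r = r'.comp h)
    (hgIso : Function.Bijective g)
    (hE : Subsingleton E) (hE' : Subsingleton E')
    (hC' : Module.rank K C' = 1) :
    Function.Surjective h ∧
      Cardinal.lift.{uA'} (Module.rank K C) =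
        1 + Cardinal.lift.{uC}
          (Module.rank K (A' ⧸ LinearMap.range (f.coprod lam))) := by

  have hq : Function.Surjective q := by
    rw [← LinearMap.range_eq_top, hTop2]
    ext x; simp [LinearMap.mem_ker, Subsingleton.elim (r x) 0]
  have hq' : Function.Surjective q' := by
    rw [← LinearMap.range_eq_top, hBot3]
    ext x; simp [LinearMap.mem_ker, Subsingleton.elim (r' x) 0]
  set gE := LinearEquiv.ofBijective g hgIso with hgE
  have hgapp : ∀ b, gE b = g b := fun b => rfl
  have hsurj : Function.Surjective h := by
    intro c'
    obtain ⟨b', rfl⟩ := hq' c'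
    obtain ⟨b, rfl⟩ := hgIso.2 b'
    exact ⟨q b, congrFun (congrArg DFunLike.coe hSq2) b⟩
  refine ⟨hsurj, ?_⟩
  set θ : A' →ₗ[K] C := q.comp ((gE.symm : B' →ₗ[K] B).comp u') with hθ
  have hθapp : ∀ a', θ a' = q (gE.symm (u' a')) := fun _ => rfl
  have hrange : LinearMap.range θ = LinearMap.ker h := by
    ext c
    constructor
    · rintro ⟨a', rfl⟩
      have h1 : h (θ a') = q' (g (gE.symm (u' a'))) :=
        congrFun (congrArg DFunLike.coe hSq2) _
      have h2 : g (gE.symm (u' a')) = u' a' := gE.apply_symm_apply _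
      have h3 : u' a' ∈ LinearMap.ker q' := hBot2 ▸ LinearMap.mem_range_self u' a'
      simp only [LinearMap.mem_ker] at h3 ⊢
      rw [h1, h2, h3]
    · intro hc
      obtain ⟨b, rfl⟩ := hq c
      have h1 : q' (g b) = 0 := by
        have := congrFun (congrArg DFunLike.coe hSq2) b
        simp only [LinearMap.comp_apply] at this
        rw [← this]; exact hc
      have h2 : g b ∈ LinearMap.range u' := by rw [hBot2]; exact h1
      obtain ⟨a', ha'⟩ := h2
      refine ⟨a', ?_⟩
      rw [hθapp, ha']
      congr 1
      exact gE.symm_apply_eq.mpr rfl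
  have hker : LinearMap.ker θ = LinearMap.range (f.coprod lam) := by
    ext a'
    simp only [LinearMap.mem_ker, hθapp]
    constructor
    · intro h0
      have h1 : gE.symm (u' a') ∈ LinearMap.ker q := h0
      rw [← hTop1] at h1
      obtain ⟨a, ha⟩ := h1
      have h2 : g (u a) = u' a' := by
        rw [ha]; exact gE.apply_symm_apply _
      have h3 : u' (f a) = u' a' := by
        rw [← h2]; exact (congrFun (congrArg DFunLike.coe hSq1) a).symm
      have h4 : a' - f a ∈ LinearMap.ker u' := by
        simp [LinearMap.mem_ker, map_sub, h3]
      rw [← hBot1] at h4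
      obtain ⟨d, hd⟩ := h4
      exact ⟨(a, d), by simp [LinearMap.coprod_apply, hd]⟩
    · rintro ⟨⟨a, d⟩, rfl⟩
      simp only [LinearMap.coprod_apply, map_add]
      have hl : u' (lam d) = 0 := by
        have : lam d ∈ LinearMap.ker u' := hBot1 ▸ LinearMap.mem_range_self lam d
        exact this
      have hf : u' (f a) = g (u a) := (congrFun (congrArg DFunLike.coe hSq1) a).symm
      rw [hl, map_zero, map_zero, add_zero, hf]
      have hb : gE.symm (g (u a)) = u a := gE.symm_apply_apply _
      rw [hb]
      have : u a ∈ LinearMap.ker q := hTop1 ▸ LinearMap.mem_range_self u a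
      exact this
  have e3 : (A' ⧸ LinearMap.range (f.coprod lam)) ≃ₗ[K] LinearMap.ker h :=
    (Submodule.quotEquivOfEq _ _ hker.symm).trans
      (θ.quotKerEquivRange.trans (LinearEquiv.ofEq _ _ hrange))
  have e2 : (C ⧸ LinearMap.ker h) ≃ₗ[K] C' := h.quotKerEquivOfSurjective hsurj
  have r1 : Module.rank K (C ⧸ LinearMap.ker h) = 1 := by
    have := e2.lift_rank_eq
    rw [hC', Cardinal.lift_one] at this
    exact (Cardinal.lift_eq_one.mp this)
  have r2 : Module.rank K (C ⧸ LinearMap.ker h) + Module.rank K (LinearMap.ker h)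
      = Module.rank K C := Submodule.rank_quotient_add_rank _
  have r3 : Cardinal.lift.{uC} (Module.rank K (A' ⧸ LinearMap.range (f.coprod lam)))
      = Cardinal.lift.{uA'} (Module.rank K (LinearMap.ker h)) := e3.lift_rank_eq
  rw [← r2, r1, Cardinal.lift_add, Cardinal.lift_one, r3]
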